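/- Let 0 < s < 1, let t > 0, let μ be a Radon measure on ℝ^d, and let r > 0 be such that the ball B(0,r) has t-thin boundary with respect to μ. Then there is a constant C, depending only on d, s and t, such that for every x ∈ B(0,r) and every ε_1 with 0 < ε_1 < 2r, |R^s_{ε_1, 2r}(χ_{B(0,r)^c} μ)(x)| ≤ C · μ(B(0,3r)) / r^s. -/

import Mathlib

/-!
For `x ∈ B(c,r)` and `y ∉ B(c,r)` one has `|y - x| > |y - c| - r`, and the points at distance
at most `2r` from `x` lie in `B(c,3r)`. The sphere `∂B(c,r)` is `μ`-null by the thin boundary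
condition. On `2r ≤ |y - c| < 3r` the kernel is at most `r^{-s}`. The layer `r < |y - c| < 2r` is
cut into dyadic pieces `2^{-k-1} r < |y - c| - r ≤ 2^{-k} r`; on each of them the kernel is at most
`(2^{-k-1} r)^{-s}` and the thin boundary condition gives measure at most `t 2^{-k} μ(B(c,2r))`, so
the contributions form a geometric series of ratio `2^{s-1} < 1`.
-/

open MeasureTheory Metric Set ENNReal Filter

/-- A ball `B(x,r)` has `t`-thin boundary with respect to `μ` if
`μ({y ∈ B(x,2r) : dist(y, ∂B(x,r)) ≤ λ r}) ≤ t λ μ(B(x,2r))` for all `λ > 0`. -/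
def ThinBoundary {d : ℕ} (μ : Measure (EuclideanSpace ℝ (Fin d))) (t : ℝ)
    (x : EuclideanSpace ℝ (Fin d)) (r : ℝ) : Prop :=
  ∀ lam : ℝ, 0 < lam →
    μ {y | y ∈ ball x (2 * r) ∧ infDist y (sphere x r) ≤ lam * r}
      ≤ ENNReal.ofReal (t * lam) * μ (ball x (2 * r))

/-- The doubly truncated `s`-Riesz transform
`R^s_{ε₁,ε₂}(ν)(x) = ∫_{ε₁<|y−x|≤ε₂} (y−x)/|y−x|^{1+s} dν(y)`. -/
noncomputable def truncRiesz {d : ℕ} (μ : Measure (EuclideanSpace ℝ (Fin d))) (s ε₁ ε₂ : ℝ)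
    (x : EuclideanSpace ℝ (Fin d)) : EuclideanSpace ℝ (Fin d) :=
  ∫ y in {y | ε₁ < dist y x ∧ dist y x ≤ ε₂}, (‖y - x‖ ^ (1 + s))⁻¹ • (y - x) ∂μ

open Topology

section NormedSpace

variable {E : Type*} [NormedAddCommGroup E] [NormedSpace ℝ E]

lemma enorm_rpow_inv_smul_le {s m : ℝ} (hs : 0 ≤ s) (hm : 0 < m) {v : E} (hv : m ≤ ‖v‖) :
    ‖(‖v‖ ^ (1 + s))⁻¹ • v‖ₑ ≤ ENNReal.ofReal (m ^ (-s)) := by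
  have hv0 : 0 < ‖v‖ := hm.trans_le hv
  rw [← ofReal_norm]
  refine ENNReal.ofReal_le_ofReal ?_
  calc ‖(‖v‖ ^ (1 + s))⁻¹ • v‖ = (‖v‖ ^ (1 + s))⁻¹ * ‖v‖ := by
        rw [norm_smul, norm_inv, Real.norm_of_nonneg (by positivity)]
    _ = ‖v‖ ^ (-s) := by
        rw [← Real.rpow_neg hv0.le, ← Real.rpow_add_one hv0.ne']
        ring_nf
    _ ≤ m ^ (-s) := Real.rpow_le_rpow_of_nonpos hm hv (by linarith)

lemma infDist_sphere_le_dist_sub {x y : E} {r : ℝ} (hr : 0 < r) (hy : r ≤ dist y x) :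
    infDist y (sphere x r) ≤ dist y x - r := by
  set ρ := dist y x
  have hρ : 0 < ρ := hr.trans_le hy
  have hρ' : ‖y - x‖ = ρ := (dist_eq_norm y x).symm
  set z := x + (r / ρ) • (y - x)
  have hz : z ∈ sphere x r := by
    rw [mem_sphere, dist_eq_norm, add_sub_cancel_left, norm_smul, hρ',
      Real.norm_of_nonneg (by positivity), div_mul_cancel₀ _ hρ.ne']
  have hyz : dist y z = ρ - r := by
    have : y - z = (1 - r / ρ) • (y - x) := by
      simp only [z, sub_smul, one_smul]
      abel
    rw [dist_eq_norm, this, norm_smul, hρ', Real.norm_of_nonneg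
      (sub_nonneg.2 ((div_le_one hρ).2 hy)), sub_mul, one_mul, div_mul_cancel₀ _ hρ.ne']
  exact hyz ▸ infDist_le_dist_of_mem hz

end NormedSpace

lemma setLIntegral_le_mul_measure {α : Type*} [MeasurableSpace α] {μ : Measure α} {A : Set α}
    {f : α → ℝ≥0∞} {c : ℝ≥0∞} (h : ∀ y ∈ A, f y ≤ c) : ∫⁻ y in A, f y ∂μ ≤ c * μ A :=
  (setLIntegral_mono measurable_const h).trans_eq (setLIntegral_const A c)

lemma exists_dyadic_scale {δ r : ℝ} (hδ : 0 < δ) (hδr : δ ≤ r) :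
    ∃ k : ℕ, r / 2 ^ (k + 1) < δ ∧ δ ≤ r / 2 ^ k := by
  obtain ⟨k, hk, hk'⟩ := exists_nat_pow_near ((one_le_div hδ).2 hδr) one_lt_two
  refine ⟨k, ?_, ?_⟩
  · rwa [div_lt_iff₀ (by positivity), mul_comm, ← div_lt_iff₀ hδ]
  · rwa [le_div_iff₀ (by positivity), mul_comm, ← le_div_iff₀ hδ]

lemma tsum_dyadic_eq {s t r : ℝ} (hs : s < 1) (ht : 0 ≤ t) (hr : 0 < r) :
    ∑' k : ℕ, ENNReal.ofReal ((r / 2 ^ (k + 1)) ^ (-s)) * ENNReal.ofReal (t / 2 ^ k)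
      = ENNReal.ofReal (t * 2 ^ s / (1 - 2 ^ (s - 1)) * r ^ (-s)) := by
  set q : ℝ := 2 ^ (s - 1)
  have hq0 : 0 ≤ q := by positivity
  have hq1 : q < 1 := Real.rpow_lt_one_of_one_lt_of_neg one_lt_two (by linarith)
  have hterm : ∀ k : ℕ, (r / 2 ^ (k + 1)) ^ (-s) * (t / 2 ^ k) = t * 2 ^ s * r ^ (-s) * q ^ k := by
    intro k
    have hq : q = 2 ^ s / 2 := Real.rpow_sub_one two_ne_zero s
    rw [Real.div_rpow hr.le (by positivity), ← Real.rpow_pow_comm zero_le_two, hq,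
      Real.rpow_neg zero_le_two, inv_pow, div_inv_eq_mul, div_pow, pow_succ]
    field_simp
  calc ∑' k : ℕ, ENNReal.ofReal ((r / 2 ^ (k + 1)) ^ (-s)) * ENNReal.ofReal (t / 2 ^ k)
      = ∑' k : ℕ, ENNReal.ofReal (t * 2 ^ s * r ^ (-s) * q ^ k) := by
        refine tsum_congr fun k => ?_
        rw [← ENNReal.ofReal_mul (by positivity), hterm]
    _ = ENNReal.ofReal (∑' k : ℕ, t * 2 ^ s * r ^ (-s) * q ^ k) :=
        (ENNReal.ofReal_tsum_of_nonneg (fun k => by positivity)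
          ((summable_geometric_of_lt_one hq0 hq1).mul_left _)).symm
    _ = _ := by
        rw [tsum_mul_left, tsum_geometric_of_lt_one hq0 hq1]
        congr 1
        ring

section PseudoMetricSpace

variable {E : Type*} [PseudoMetricSpace E]

def dyadicLayer (c : E) (r : ℝ) (k : ℕ) : Set E :=
  {y | dist y c < 2 * r ∧ r / 2 ^ (k + 1) < dist y c - r ∧ dist y c - r ≤ r / 2 ^ k}

lemma ball_diff_ball_subset_sphere_union (c : E) (r : ℝ) :
    ball c (3 * r) \ ball c r ⊆
      sphere c r ∪ (ball c (3 * r) \ ball c (2 * r)) ∪ ⋃ k, dyadicLayer c r k := by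
  rintro y ⟨hy3, hy1⟩
  simp only [mem_ball, not_lt] at hy3 hy1
  rcases hy1.eq_or_lt with hyr | hyr
  · exact Or.inl (Or.inl hyr.symm)
  rcases le_or_gt (2 * r) (dist y c) with hy2 | hy2
  · exact Or.inl (Or.inr ⟨hy3, not_lt.2 hy2⟩)
  obtain ⟨k, hk⟩ := exists_dyadic_scale (sub_pos.2 hyr) (by linarith : dist y c - r ≤ r)
  exact Or.inr (mem_iUnion.2 ⟨k, hy2, hk⟩)

lemma sub_lt_dist_of_mem_ball {c x : E} {r : ℝ} (hx : x ∈ ball c r) (y : E) :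
    dist y c - r < dist y x := by
  have := dist_triangle y x c
  rw [mem_ball] at hx
  linarith

end PseudoMetricSpace

section ThinBoundary

variable {d : ℕ} {μ : Measure (EuclideanSpace ℝ (Fin d))} {t r : ℝ} {c : EuclideanSpace ℝ (Fin d)}

lemma ThinBoundary.measure_shell_le (h : ThinBoundary μ t c r) (hr : 0 < r) {lam : ℝ}
    (hlam : 0 < lam) :
    μ {y | dist y c < 2 * r ∧ r ≤ dist y c ∧ dist y c - r ≤ lam * r}
      ≤ ENNReal.ofReal (t * lam) * μ (ball c (2 * r)) := by
  refine (measure_mono ?_).trans (h lam hlam)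
  rintro y ⟨hy2, hy1, hylam⟩
  exact ⟨hy2, (infDist_sphere_le_dist_sub hr hy1).trans hylam⟩

lemma ThinBoundary.measure_sphere_eq_zero [IsLocallyFiniteMeasure μ] (h : ThinBoundary μ t c r)
    (hr : 0 < r) : μ (sphere c r) = 0 := by
  have hle : ∀ lam > 0, μ (sphere c r) ≤ ENNReal.ofReal (t * lam) * μ (ball c (2 * r)) := by
    refine fun lam hlam => (measure_mono fun y (hy : dist y c = r) => ?_).trans
      (h.measure_shell_le hr hlam)
    exact ⟨by linarith, hy.ge, by rw [hy, sub_self]; positivity⟩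
  have hlim : Tendsto (fun lam => ENNReal.ofReal (t * lam) * μ (ball c (2 * r))) (𝓝[>] 0)
      (𝓝 0) := by
    have := ENNReal.tendsto_ofReal
      (((continuous_const_mul t).tendsto' 0 0 (mul_zero t)).mono_left
        (nhdsWithin_le_nhds (s := Ioi 0)))
    simpa using ENNReal.Tendsto.mul_const this (Or.inr measure_ball_lt_top.ne)
  exact le_antisymm (ge_of_tendsto hlim (eventually_nhdsWithin_of_forall hle)) bot_le

lemma ThinBoundary.measure_dyadicLayer_le (h : ThinBoundary μ t c r) (hr : 0 < r) (k : ℕ) :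
    μ (dyadicLayer c r k) ≤ ENNReal.ofReal (t / 2 ^ k) * μ (ball c (2 * r)) := by
  have hk := h.measure_shell_le hr (lam := 1 / 2 ^ k) (by positivity)
  rw [mul_one_div] at hk
  refine (measure_mono ?_).trans hk
  rintro y ⟨hy2, hlow, hup⟩
  refine ⟨hy2, ?_, ?_⟩
  · have : 0 < r / 2 ^ (k + 1) := by positivity
    linarith
  · rwa [one_div_mul_eq_div]

end ThinBoundary

section RieszEstimate

variable {d : ℕ} {μ : Measure (EuclideanSpace ℝ (Fin d))} {s t r : ℝ}
  {c x : EuclideanSpace ℝ (Fin d)}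

lemma enorm_truncRiesz_restrict_compl_ball_le (hx : x ∈ ball c r) (ε₁ : ℝ) :
    ‖truncRiesz (μ.restrict (ball c r)ᶜ) s ε₁ (2 * r) x‖ₑ
      ≤ ∫⁻ y in ball c (3 * r) \ ball c r, ‖(‖y - x‖ ^ (1 + s))⁻¹ • (y - x)‖ₑ ∂μ := by
  have hS : MeasurableSet {y | ε₁ < dist y x ∧ dist y x ≤ 2 * r} :=
    (measurableSet_lt measurable_const (measurable_id.dist measurable_const)).inter
      (measurableSet_le (measurable_id.dist measurable_const) measurable_const)
  refine (enorm_integral_le_lintegral_enorm _).trans ?_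
  rw [Measure.restrict_restrict hS]
  refine lintegral_mono_set fun y ⟨⟨_, hyx⟩, hyc⟩ => ⟨?_, hyc⟩
  have := sub_lt_dist_of_mem_ball hx y
  rw [mem_ball]
  linarith

theorem ThinBoundary.lintegral_kernel_ball_diff_ball_le [IsLocallyFiniteMeasure μ]
    (h : ThinBoundary μ t c r) (hs0 : 0 < s) (hs1 : s < 1) (ht : 0 ≤ t) (hr : 0 < r)
    (hx : x ∈ ball c r) :
    ∫⁻ y in ball c (3 * r) \ ball c r, ‖(‖y - x‖ ^ (1 + s))⁻¹ • (y - x)‖ₑ ∂μ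
      ≤ ENNReal.ofReal ((1 + t * 2 ^ s / (1 - 2 ^ (s - 1))) * r ^ (-s)) * μ (ball c (3 * r)) := by
  set K := fun y => ‖(‖y - x‖ ^ (1 + s))⁻¹ • (y - x)‖ₑ
  have hK : ∀ {m : ℝ}, 0 < m → ∀ y, m ≤ dist y c - r → K y ≤ ENNReal.ofReal (m ^ (-s)) :=
    fun hm y hy => enorm_rpow_inv_smul_le hs0.le hm
      (by rw [← dist_eq_norm]; linarith [sub_lt_dist_of_mem_ball hx y])
  have hsphere : ∫⁻ y in sphere c r, K y ∂μ = 0 :=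
    setLIntegral_measure_zero _ _ (h.measure_sphere_eq_zero hr)
  have houter : ∫⁻ y in ball c (3 * r) \ ball c (2 * r), K y ∂μ
      ≤ ENNReal.ofReal (r ^ (-s)) * μ (ball c (3 * r)) := by
    refine (setLIntegral_le_mul_measure fun y hy => hK hr y ?_).trans
      (mul_le_mul_right (measure_mono sdiff_subset) _)
    have : 2 * r ≤ dist y c := not_lt.1 hy.2
    linarith
  have hlayer : ∀ k, ∫⁻ y in dyadicLayer c r k, K y ∂μ
      ≤ ENNReal.ofReal ((r / 2 ^ (k + 1)) ^ (-s)) * ENNReal.ofReal (t / 2 ^ k)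
        * μ (ball c (2 * r)) := fun k => by
    rw [mul_assoc]
    exact (setLIntegral_le_mul_measure fun y hy => hK (by positivity) y hy.2.1.le).trans
      (mul_le_mul_right (h.measure_dyadicLayer_le hr k) _)
  have hq1 : (2 : ℝ) ^ (s - 1) < 1 := Real.rpow_lt_one_of_one_lt_of_neg one_lt_two (by linarith)
  have hb : 0 ≤ t * 2 ^ s / (1 - 2 ^ (s - 1)) * r ^ (-s) :=
    mul_nonneg (div_nonneg (by positivity) (sub_nonneg.2 hq1.le)) (by positivity)
  calc ∫⁻ y in ball c (3 * r) \ ball c r, K y ∂μ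
      ≤ ∫⁻ y in sphere c r ∪ (ball c (3 * r) \ ball c (2 * r)) ∪ ⋃ k, dyadicLayer c r k, K y ∂μ :=
        lintegral_mono_set (ball_diff_ball_subset_sphere_union c r)
    _ ≤ ∫⁻ y in sphere c r, K y ∂μ + ∫⁻ y in ball c (3 * r) \ ball c (2 * r), K y ∂μ
          + ∑' k, ∫⁻ y in dyadicLayer c r k, K y ∂μ :=
        (lintegral_union_le _ _ _).trans
          (add_le_add (lintegral_union_le _ _ _) (lintegral_iUnion_le _ _))
    _ ≤ 0 + ENNReal.ofReal (r ^ (-s)) * μ (ball c (3 * r))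
          + ENNReal.ofReal (t * 2 ^ s / (1 - 2 ^ (s - 1)) * r ^ (-s)) * μ (ball c (2 * r)) := by
        rw [← tsum_dyadic_eq hs1 ht hr, ← ENNReal.tsum_mul_right]
        exact add_le_add (add_le_add hsphere.le houter) (ENNReal.tsum_le_tsum hlayer)
    _ ≤ ENNReal.ofReal (r ^ (-s)) * μ (ball c (3 * r))
          + ENNReal.ofReal (t * 2 ^ s / (1 - 2 ^ (s - 1)) * r ^ (-s)) * μ (ball c (3 * r)) := by
        rw [zero_add]
        gcongr
        norm_num
    _ = _ := by
        rw [← add_mul, ← ENNReal.ofReal_add (by positivity) hb]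
        congr 2
        ring

end RieszEstimate

theorem statement15 (d : ℕ) (s t : ℝ) (hs0 : 0 < s) (hs1 : s < 1) (ht : 0 < t) :
    ∃ C : ℝ, 0 < C ∧
      ∀ (μ : Measure (EuclideanSpace ℝ (Fin d))) [IsLocallyFiniteMeasure μ],
        ∀ r : ℝ, 0 < r → ThinBoundary μ t (0 : EuclideanSpace ℝ (Fin d)) r →
          ∀ x ∈ ball (0 : EuclideanSpace ℝ (Fin d)) r, ∀ ε₁ : ℝ, 0 < ε₁ → ε₁ < 2 * r →
            ‖truncRiesz (μ.restrict ((ball (0 : EuclideanSpace ℝ (Fin d)) r)ᶜ)) s ε₁ (2 * r) x‖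
              ≤ C * (μ (ball (0 : EuclideanSpace ℝ (Fin d)) (3 * r))).toReal / r ^ s := by
  have hq1 : (2 : ℝ) ^ (s - 1) < 1 := Real.rpow_lt_one_of_one_lt_of_neg one_lt_two (by linarith)
  set C := 1 + t * 2 ^ s / (1 - 2 ^ (s - 1))
  have hC : 0 < C := add_pos_of_pos_of_nonneg one_pos
    (div_nonneg (by positivity) (sub_nonneg.2 hq1.le))
  refine ⟨C, hC, fun μ _ r hr hthin x hx ε₁ _ _ => ?_⟩
  have hbound := (enorm_truncRiesz_restrict_compl_ball_le hx ε₁).trans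
    (hthin.lintegral_kernel_ball_diff_ball_le hs0 hs1 ht.le hr hx)
  calc _ = ‖truncRiesz (μ.restrict (ball 0 r)ᶜ) s ε₁ (2 * r) x‖ₑ.toReal := (toReal_enorm _).symm
    _ ≤ (ENNReal.ofReal (C * r ^ (-s)) * μ (ball 0 (3 * r))).toReal :=
        toReal_mono (mul_ne_top ofReal_ne_top measure_ball_lt_top.ne) hbound
    _ = _ := by
        rw [toReal_mul, toReal_ofReal (by positivity), Real.rpow_neg hr.le]
        ring
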